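/- Let G₂ be the directed weighted graph with vertex set (V(T₂) \ {z}) ∪ {s} whose edges are: all edges of G joining two vertices of V(T₂) \ {z}, with their weights in G; together with, for every u ∈ V(T₂) \ {z} with dist_{G[Ψ(V(T₁))]}(s,u) < ∞, an edge (s,u) of weight dist_{G[Ψ(V(T₁))]}(s,u). Then for every failed vertex x ∈ V(T₂) \ {z} and every destination t ∈ V(T₂) \ {z}, dist_{G₂−x}(s,t) = dist_{G−x}(s,t). -/

import Mathlib

open scoped ENNReal

/-- A directed graph on vertex type `V` with real edge weights. -/
structure WDigraph (V : Type) where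
  Adj : V → V → Prop
  w : V → V → ℝ

namespace WDigraph

variable {V : Type}

/-- The weighted length of a walk, given as the list of its vertices:
the sum of the weights of consecutive pairs. -/
def len (G : WDigraph V) (l : List V) : ℝ :=
  ((l.zip l.tail).map fun p => G.w p.1 p.2).sum

/-- `l` is a (simple) path from `u` to `v` in `G`: a nonempty list of pairwise distinct
vertices, consecutively joined by edges of `G`, starting at `u` and ending at `v`. -/
def IsPathFrom (G : WDigraph V) (u v : V) (l : List V) : Prop :=
  l.Chain' G.Adj ∧ l.Nodup ∧ l.head? = some u ∧ l.getLast? = some v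

/-- The distance from `u` to `v` in `G`: the minimum length of a path from `u` to `v`,
equal to `∞` if no such path exists. -/
noncomputable def dist (G : WDigraph V) (u v : V) : ℝ≥0∞ :=
  ⨅ (l : List V) (_ : G.IsPathFrom u v l), ENNReal.ofReal (G.len l)

/-- `G − x`: the graph obtained from `G` by deleting the vertex `x`
and all edges incident to it. -/
def deleteVert (G : WDigraph V) (x : V) : WDigraph V where
  Adj a b := G.Adj a b ∧ a ≠ x ∧ b ≠ x
  w := G.w

/-- `G[Ψ(U)]`: the subgraph of `G` consisting of the edges with at least one endpoint
in `U` (and their endpoints). -/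
def psiSub (G : WDigraph V) (U : Set V) : WDigraph V where
  Adj a b := G.Adj a b ∧ (a ∈ U ∨ b ∈ U)
  w := G.w

/-- All edge weights of `G` are positive. -/
def PosWeights (G : WDigraph V) : Prop := ∀ a b, G.Adj a b → 0 < G.w a b

end WDigraph

/-- Every prefix of the path `P` (starting at `s`) is a shortest path in `G`. -/
def ShortestPrefixes {V : Type} (G : WDigraph V) (s : V) (P : List V) : Prop :=
  ∀ k < P.length, ENNReal.ofReal (G.len (P.take (k + 1))) = G.dist s (P.getD k s)
/-- `T` is a shortest path tree of `G` rooted at `s`, encoded by its vertex set `VT`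
and the function `tp` assigning to each vertex of `T` the tree path from `s` to it:
`T` spans exactly the vertices reachable from `s`, each tree path is a path of `G` of
length `dist_G(s, ·)`, and tree paths are prefix-consistent (for every `u` on the tree
path to `v`, the tree path to `u` is a prefix of the tree path to `v`). -/
structure IsSPT {V : Type} (G : WDigraph V) (s : V) (VT : Set V)
    (tp : V → List V) : Prop where
  root_mem : s ∈ VT
  root_path : tp s = [s]
  path : ∀ v ∈ VT, G.IsPathFrom s v (tp v)
  shortest : ∀ v ∈ VT, ENNReal.ofReal (G.len (tp v)) = G.dist s v
  closed : ∀ v ∈ VT, ∀ u ∈ tp v, u ∈ VT ∧ tp u <+: tp v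
  spans : ∀ v, G.dist s v ≠ ⊤ → v ∈ VT

/-- The graph `G₂`: vertex set `(V(T₂) \ {z}) ∪ {s}`; its edges are all edges of `G`
joining two vertices of `S2 \ {z} = V(T₂) \ {z}` (with their `G`-weights), together
with an edge `(s, u)` of weight `dist_{G[Ψ(S1)]}(s, u)` for every `u ∈ S2 \ {z}` with
`dist_{G[Ψ(S1)]}(s, u) < ∞`. -/
noncomputable def G2 {V : Type} [DecidableEq V] (G : WDigraph V) (s z : V) (S1 S2 : Set V) :
    WDigraph V where
  Adj a b := (a ∈ S2 \ {z} ∧ b ∈ S2 \ {z} ∧ G.Adj a b) ∨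
    (a = s ∧ b ∈ S2 \ {z} ∧ (G.psiSub S1).dist s b ≠ ⊤)
  w a b := if a = s then ((G.psiSub S1).dist s b).toReal else G.w a b

/-!
Every vertex on a path from `s` is reachable, hence lies in `V(T₁) ∪ (V(T₂) \ {z})`. A path of
`G − x` from `s` to `t ∉ V(T₁)` therefore leaves `T₁` for the last time along an edge `(b, u)` and
then stays in `V(T₂) \ {z}`; its part up to `u` is at least `dist_G(s, b) + w(b, u)`, which is
realised inside `G[Ψ(V(T₁))]` by the tree path to `b`, so the `G₂`-edge `(s, u)` is no longer.
Conversely, a path of `G[Ψ(V(T₁))]` to `u ∉ V(T₁)` ends with an edge `(b, u)` with `b ∈ V(T₁)`,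
so the `G₂`-edge `(s, u)` can be replaced by the tree path to `b` followed by `(b, u)`; that tree
path stays in `T₁` and so avoids the failed vertex `x`.
-/

namespace List

variable {α : Type*}

theorem exists_eq_append_cons_cons_of_getLast? {p : α → Prop} :
    ∀ {l : List α}, (∃ a ∈ l, p a) → (∀ b ∈ l.getLast?, ¬ p b) →
      ∃ A b u D, l = A ++ b :: u :: D ∧ p b ∧ ∀ v ∈ u :: D, ¬ p v
  | [], ⟨_, ha, _⟩, _ => absurd ha not_mem_nil
  | a :: l, hex, hlast => by
    by_cases hl : ∃ v ∈ l, p v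
    · have hl0 : l ≠ [] := by rintro rfl; simp at hl
      rw [getLast?_cons_of_ne_nil hl0] at hlast
      obtain ⟨A, b, u, D, rfl, hb, hD⟩ := exists_eq_append_cons_cons_of_getLast? hl hlast
      exact ⟨a :: A, b, u, D, rfl, hb, hD⟩
    · push Not at hl
      have ha : p a := by
        obtain ⟨v, hv, hpv⟩ := hex
        rcases mem_cons.mp hv with rfl | hv
        exacts [hpv, absurd hpv (hl v hv)]
      rcases l with _ | ⟨u, D⟩
      · exact absurd ha (hlast a rfl)
      · exact ⟨[], a, u, D, rfl, ha, hl⟩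

theorem exists_eq_append_pair_of_head?_of_getLast? {l : List α} {a b : α}
    (ha : l.head? = some a) (hb : l.getLast? = some b) (hab : a ≠ b) :
    ∃ A c, l = A ++ [c, b] := by
  obtain ⟨l', rfl⟩ := getLast?_eq_some_iff.mp hb
  rcases l'.eq_nil_or_concat with rfl | ⟨A, c, rfl⟩
  · exact absurd (by simpa using ha.symm) hab
  · exact ⟨A, c, by simp⟩

end List

namespace WDigraph

variable {V : Type} {G H : WDigraph V} {S : Set V} {s t u v b x : V} {l p A D : List V}

@[simp] lemma len_singleton (G : WDigraph V) (a : V) : G.len [a] = 0 := rfl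

@[simp] lemma len_cons_cons (G : WDigraph V) (a b : V) (l : List V) :
    G.len (a :: b :: l) = G.w a b + G.len (b :: l) := by
  simp [len]

lemma len_append_cons_cons (G : WDigraph V) :
    ∀ (A : List V) (b u : V) (D : List V),
      G.len (A ++ b :: u :: D) = G.len (A ++ [b]) + G.w b u + G.len (u :: D)
  | [], _, _, _ => by simp
  | [a], b, u, D => by
    simp only [List.cons_append, List.nil_append, len_cons_cons, len_singleton]
    ring
  | a :: a' :: A, b, u, D => by
    have ih := len_append_cons_cons G (a' :: A) b u D
    simp only [List.cons_append, len_cons_cons] at ih ⊢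
    rw [ih]; ring

lemma len_congr (h : ∀ a ∈ l, ∀ c ∈ l, G.w a c = H.w a c) : G.len l = H.len l := by
  unfold len
  congr 1
  refine List.map_congr_left fun q hq => ?_
  have hq' := List.of_mem_zip hq
  exact h _ hq'.1 _ (List.mem_of_mem_tail hq'.2)

lemma PosWeights.len_nonneg (hw : G.PosWeights) (h : l.IsChain G.Adj) : 0 ≤ G.len l := by
  induction h with
  | nil | singleton => simp [len]
  | cons_cons hab _ ih => rw [len_cons_cons]; exact add_nonneg (hw _ _ hab).le ih

lemma PosWeights.ofReal_len_append_cons_cons (hw : G.PosWeights)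
    (h : (A ++ b :: u :: D).IsChain G.Adj) :
    ENNReal.ofReal (G.len (A ++ b :: u :: D)) =
      ENNReal.ofReal (G.len (A ++ [b])) + ENNReal.ofReal (G.w b u) +
        ENNReal.ofReal (G.len (u :: D)) := by
  rw [← List.singleton_append, ← List.append_assoc] at h
  obtain ⟨hAb, huD, hbu⟩ := List.isChain_append.mp h
  have hbu : G.Adj b u := hbu b (by simp) u rfl
  rw [len_append_cons_cons, ENNReal.ofReal_add (by linarith [hw.len_nonneg hAb, hw b u hbu])
    (hw.len_nonneg huD), ENNReal.ofReal_add (hw.len_nonneg hAb) (hw b u hbu).le]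

lemma isPathFrom_iff : G.IsPathFrom u v l ↔
    l.IsChain G.Adj ∧ l.Nodup ∧ l.head? = some u ∧ l.getLast? = some v :=
  Iff.rfl

lemma isPathFrom_singleton (G : WDigraph V) (u : V) : G.IsPathFrom u u [u] :=
  ⟨.singleton u, List.nodup_singleton u, rfl, rfl⟩

lemma IsPathFrom.mono (h : G.IsPathFrom u v l)
    (hGH : ∀ a ∈ l, ∀ c ∈ l, G.Adj a c → H.Adj a c) : H.IsPathFrom u v l :=
  ⟨h.1.imp_of_mem_imp fun a c ha hc => hGH a ha c hc, h.2⟩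

lemma IsPathFrom.head_mem (h : G.IsPathFrom u v l) : u ∈ l :=
  List.mem_of_mem_head? h.2.2.1

lemma isPathFrom_append_cons_cons_iff :
    G.IsPathFrom s t (A ++ b :: u :: D) ↔ G.IsPathFrom s b (A ++ [b]) ∧
      G.IsPathFrom u t (u :: D) ∧ G.Adj b u ∧ (A ++ [b]).Disjoint (u :: D) := by
  rw [← List.singleton_append (l := u :: D), ← List.append_assoc]
  simp only [isPathFrom_iff, List.isChain_append, List.nodup_append, List.head?_append,
    List.getLast?_append, List.Disjoint]
  grind

lemma IsPathFrom.dist_le (h : G.IsPathFrom u v l) : G.dist u v ≤ ENNReal.ofReal (G.len l) :=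
  iInf₂_le l h

lemma le_dist {c : ℝ≥0∞} (h : ∀ l, G.IsPathFrom u v l → c ≤ ENNReal.ofReal (G.len l)) :
    c ≤ G.dist u v :=
  le_iInf₂ h

lemma le_dist_add {c d : ℝ≥0∞}
    (h : ∀ l, G.IsPathFrom u v l → c ≤ ENNReal.ofReal (G.len l) + d) : c ≤ G.dist u v + d := by
  simp only [dist, ENNReal.iInf_add]
  exact le_iInf₂ h

lemma IsPathFrom.of_deleteVert (h : (G.deleteVert x).IsPathFrom u v l) : G.IsPathFrom u v l :=
  h.mono fun _ _ _ _ hac => hac.1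

lemma IsPathFrom.of_psiSub (h : (G.psiSub S).IsPathFrom u v l) : G.IsPathFrom u v l :=
  h.mono fun _ _ _ _ hac => hac.1

lemma IsPathFrom.deleteVert (h : G.IsPathFrom u v l) (hx : x ∉ l) :
    (G.deleteVert x).IsPathFrom u v l :=
  h.mono fun _ ha _ hc hac => ⟨hac, ne_of_mem_of_not_mem ha hx, ne_of_mem_of_not_mem hc hx⟩

lemma IsPathFrom.concat_of_append_cons (h : G.IsPathFrom s t (A ++ v :: D)) :
    G.IsPathFrom s v (A ++ [v]) := by
  rw [← List.singleton_append, ← List.append_assoc] at h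
  refine ⟨(List.isChain_append.mp h.1).1, h.2.1.sublist (List.sublist_append_left _ _), ?_,
    List.getLast?_concat⟩
  simpa [List.head?_append] using h.2.2.1

lemma IsPathFrom.dist_ne_top_of_mem (h : G.IsPathFrom s t l) (hv : v ∈ l) : G.dist s v ≠ ⊤ := by
  obtain ⟨A, D, rfl⟩ := List.append_of_mem hv
  exact (h.concat_of_append_cons.dist_le.trans_lt ENNReal.ofReal_lt_top).ne

lemma psiSub_dist_le_of_shortest (hw : G.PosWeights) (hp : G.IsPathFrom s b p)
    (hp_len : ENNReal.ofReal (G.len p) = G.dist s b) (hpS : ∀ v ∈ p, v ∈ S)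
    (hbu : G.Adj b u) (hu : u ∉ S) :
    (G.psiSub S).dist s u ≤ G.dist s b + ENNReal.ofReal (G.w b u) := by
  obtain ⟨A, rfl⟩ := List.getLast?_eq_some_iff.mp hp.2.2.2
  have hb : b ∈ S := hpS b List.mem_concat_self
  have hpath : (G.psiSub S).IsPathFrom s u (A ++ [b, u]) :=
    isPathFrom_append_cons_cons_iff.mpr ⟨hp.mono fun a ha _ _ hac => ⟨hac, .inl (hpS a ha)⟩,
      isPathFrom_singleton _ u, ⟨hbu, .inl hb⟩,
      List.disjoint_singleton.mpr fun hu' => hu (hpS u hu')⟩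
  calc (G.psiSub S).dist s u ≤ ENNReal.ofReal (G.len (A ++ [b, u])) := hpath.dist_le
    _ = G.dist s b + ENNReal.ofReal (G.w b u) := by
      rw [hw.ofReal_len_append_cons_cons hpath.of_psiSub.1, hp_len]; simp

lemma PosWeights.exists_dist_add_le_of_psiSub (hw : G.PosWeights) (hs : s ∈ S) (hu : u ∉ S)
    {Q : List V} (hQ : (G.psiSub S).IsPathFrom s u Q) :
    ∃ b ∈ S, G.Adj b u ∧ G.dist s b + ENNReal.ofReal (G.w b u) ≤ ENNReal.ofReal (G.len Q) := by
  obtain ⟨A, b, rfl⟩ := List.exists_eq_append_pair_of_head?_of_getLast? hQ.2.2.1 hQ.2.2.2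
    (ne_of_mem_of_not_mem hs hu)
  obtain ⟨hAb, -, hbu, -⟩ := isPathFrom_append_cons_cons_iff.mp hQ
  refine ⟨b, hbu.2.resolve_right hu, hbu.1, ?_⟩
  rw [hw.ofReal_len_append_cons_cons hQ.of_psiSub.1]
  simpa using hAb.of_psiSub.dist_le

end WDigraph

section G2

open WDigraph

variable {V : Type} [DecidableEq V] {G : WDigraph V} {s z x t u : V} {S1 S2 VT : Set V}
  {tp : V → List V} {D : List V}

lemma ofReal_len_G2_cons_cons (hw : G.PosWeights) (hs : s ∉ u :: D)
    (hu : (G.psiSub S1).dist s u ≠ ⊤) (hD : (u :: D).IsChain G.Adj) :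
    ENNReal.ofReal ((G2 G s z S1 S2).len (s :: u :: D)) =
      (G.psiSub S1).dist s u + ENNReal.ofReal (G.len (u :: D)) := by
  have hlen : (G2 G s z S1 S2).len (u :: D) = G.len (u :: D) :=
    len_congr fun a ha _ _ => if_neg (ne_of_mem_of_not_mem ha hs)
  have hsu : (G2 G s z S1 S2).w s u = ((G.psiSub S1).dist s u).toReal := if_pos rfl
  rw [len_cons_cons, hlen, hsu, ENNReal.ofReal_add ENNReal.toReal_nonneg (hw.len_nonneg hD),
    ENNReal.ofReal_toReal hu]

lemma dist_G2_deleteVert_le (hw : G.PosWeights) (hT : IsSPT G s VT tp) (hS1 : S1 ⊆ VT)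
    (hanc : ∀ v ∈ S1, ∀ u ∈ tp v, u ∈ S1) (hsS1 : s ∈ S1) (hdisj : Disjoint S1 (S2 \ {z}))
    (hcover : VT ⊆ S1 ∪ S2 \ {z}) (hx : x ∈ S2 \ {z})
    (ht : t ∈ S2 \ {z}) :
    ((G2 G s z S1 S2).deleteVert x).dist s t ≤ (G.deleteVert x).dist s t := by
  refine le_dist fun P hP => ?_
  have hPS : ∀ v ∈ P, v ∉ S1 → v ∈ S2 \ {z} := fun v hv hv1 =>
    (hcover (hT.spans v (hP.of_deleteVert.dist_ne_top_of_mem hv))).resolve_left hv1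
  obtain ⟨C, b, u, D, rfl, hb, hD⟩ := List.exists_eq_append_cons_cons_of_getLast?
    (p := (· ∈ S1)) ⟨s, hP.head_mem, hsS1⟩
    (by rw [hP.2.2.2]; rintro _ ⟨⟩; exact hdisj.notMem_of_mem_right ht)
  obtain ⟨hCb, huD, hbu, -⟩ := isPathFrom_append_cons_cons_iff.mp hP
  have hD' : ∀ v ∈ u :: D, v ∈ S2 \ {z} := fun v hv => hPS v (by simp [hv]) (hD v hv)
  have hsD : s ∉ u :: D := fun h => hD s h hsS1
  have hΨ := psiSub_dist_le_of_shortest hw (hT.path b (hS1 hb)) (hT.shortest b (hS1 hb))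
    (hanc b hb) hbu.1 (hD u List.mem_cons_self)
  have hΨ_top : (G.psiSub S1).dist s u ≠ ⊤ :=
    (hΨ.trans_lt (ENNReal.add_lt_top.mpr ⟨(hCb.of_deleteVert.dist_le.trans_lt
      ENNReal.ofReal_lt_top), ENNReal.ofReal_lt_top⟩)).ne
  have hG2 : ((G2 G s z S1 S2).deleteVert x).IsPathFrom s t (s :: u :: D) :=
    isPathFrom_append_cons_cons_iff (A := []).mpr ⟨isPathFrom_singleton _ s,
      huD.mono fun a ha c hc h => ⟨.inl ⟨hD' a ha, hD' c hc, h.1⟩, h.2⟩,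
      ⟨.inr ⟨rfl, hD' u List.mem_cons_self, hΨ_top⟩,
        ne_of_mem_of_not_mem hsS1 (hdisj.notMem_of_mem_right hx), hbu.2.2⟩,
      List.singleton_disjoint.mpr hsD⟩
  calc ((G2 G s z S1 S2).deleteVert x).dist s t
      ≤ ENNReal.ofReal ((G2 G s z S1 S2).len (s :: u :: D)) := hG2.dist_le
    _ = (G.psiSub S1).dist s u + ENNReal.ofReal (G.len (u :: D)) :=
      ofReal_len_G2_cons_cons hw hsD hΨ_top huD.of_deleteVert.1
    _ ≤ ENNReal.ofReal (G.len (C ++ [b])) + ENNReal.ofReal (G.w b u) +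
        ENNReal.ofReal (G.len (u :: D)) := by
      gcongr
      exact hΨ.trans (add_le_add_left hCb.of_deleteVert.dist_le _)
    _ = ENNReal.ofReal ((G.deleteVert x).len (C ++ b :: u :: D)) :=
      (hw.ofReal_len_append_cons_cons hP.of_deleteVert.1).symm

lemma dist_deleteVert_le_G2 (hw : G.PosWeights) (hT : IsSPT G s VT tp) (hS1 : S1 ⊆ VT)
    (hanc : ∀ v ∈ S1, ∀ u ∈ tp v, u ∈ S1) (hsS1 : s ∈ S1) (hdisj : Disjoint S1 (S2 \ {z}))
    (hx : x ∈ S2 \ {z}) (ht : t ∈ S2 \ {z}) :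
    (G.deleteVert x).dist s t ≤ ((G2 G s z S1 S2).deleteVert x).dist s t := by
  refine le_dist fun P hP => ?_
  obtain ⟨u, D, rfl⟩ : ∃ u D, P = s :: u :: D := by
    obtain ⟨-, -, hhead, hlast⟩ := hP
    rcases P with _ | ⟨s', _ | ⟨u, D⟩⟩
    · simp at hhead
    · simp only [List.head?_cons, List.getLast?_singleton, Option.some.injEq] at hhead hlast
      exact absurd (hhead ▸ hlast ▸ ht) (hdisj.notMem_of_mem_left hsS1)
    · exact ⟨u, D, by simpa using hhead⟩
  obtain ⟨-, huD, hsu, hsD⟩ := isPathFrom_append_cons_cons_iff (A := []).mp hP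
  have hsD : s ∉ u :: D := List.singleton_disjoint.mp hsD
  obtain ⟨⟨hsS, -⟩ | ⟨-, hu, hΨ_top⟩, -, hux⟩ := hsu
  · exact absurd hsS (hdisj.notMem_of_mem_left hsS1)
  have hD : ∀ v ∈ u :: D, v ∈ S2 \ {z} := by
    refine List.forall_mem_cons.mpr ⟨hu, huD.1.cons_induction (· ∈ S2 \ {z}) D ?_ hu⟩
    rintro a c ⟨⟨-, hc, -⟩ | ⟨-, hc, -⟩, -⟩ - <;> exact hc
  have huD' : (G.deleteVert x).IsPathFrom u t (u :: D) :=
    huD.mono fun a ha _ _ h =>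
      ⟨(h.1.resolve_right fun h' => hsD (h'.1 ▸ ha)).2.2, h.2⟩
  rw [show ((G2 G s z S1 S2).deleteVert x).len = (G2 G s z S1 S2).len from rfl,
    ofReal_len_G2_cons_cons hw hsD hΨ_top huD'.of_deleteVert.1]
  refine le_dist_add fun Q hQ => ?_
  obtain ⟨b, hb, hbu, hQ_len⟩ := hw.exists_dist_add_le_of_psiSub hsS1
    (hdisj.notMem_of_mem_right hu) hQ
  have htp := hT.path b (hS1 hb)
  obtain ⟨A, hA⟩ := List.getLast?_eq_some_iff.mp htp.2.2.2
  have hxtp : x ∉ tp b := fun h => hdisj.notMem_of_mem_right hx (hanc b hb x h)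
  have hW : (G.deleteVert x).IsPathFrom s t (A ++ b :: u :: D) :=
    isPathFrom_append_cons_cons_iff.mpr ⟨hA ▸ htp.deleteVert hxtp, huD',
      ⟨hbu, fun h => hxtp (h ▸ hA ▸ List.mem_concat_self), hux⟩,
      fun v hv hv' => hdisj.notMem_of_mem_left (hanc b hb v (hA ▸ hv)) (hD v hv')⟩
  calc (G.deleteVert x).dist s t ≤ ENNReal.ofReal (G.len (A ++ b :: u :: D)) := hW.dist_le
    _ = G.dist s b + ENNReal.ofReal (G.w b u) + ENNReal.ofReal (G.len (u :: D)) := by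
      rw [hw.ofReal_len_append_cons_cons hW.of_deleteVert.1, ← hA, hT.shortest b (hS1 hb)]
    _ ≤ ENNReal.ofReal (G.len Q) + ENNReal.ofReal (G.len (u :: D)) := by gcongr

end G2

theorem G2_dist_eq_general {V : Type} [DecidableEq V] (G : WDigraph V) (hw : G.PosWeights)
    (s : V) (VT : Set V) (tp : V → List V) (hT : IsSPT G s VT tp)
    (z : V) (S1 S2 : Set V)
    (hunion : S1 ∪ S2 = VT) (hinter : S1 ∩ S2 = {z}) (hsS1 : s ∈ S1)
    (hanc : ∀ v ∈ S1, ∀ u ∈ tp v, u ∈ S1) :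
    ∀ x ∈ S2 \ {z}, ∀ t ∈ S2 \ {z},
      ((G2 G s z S1 S2).deleteVert x).dist s t = (G.deleteVert x).dist s t := by
  intro x hx t ht
  have hS1 : S1 ⊆ VT := hunion ▸ Set.subset_union_left
  have hzS1 : z ∈ S1 := (hinter.symm ▸ Set.mem_singleton z : z ∈ S1 ∩ S2).1
  have hdisj : Disjoint S1 (S2 \ {z}) := by
    rw [Set.disjoint_iff_inter_eq_empty, ← Set.inter_sdiff_assoc, hinter, Set.sdiff_self]
  have hcover : VT ⊆ S1 ∪ S2 \ {z} := calc
    VT = S1 ∪ S2 \ S1 := by rw [Set.union_sdiff_self, hunion]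
    _ ⊆ S1 ∪ S2 \ {z} := by gcongr; exact Set.singleton_subset_iff.mpr hzS1
  exact le_antisymm (dist_G2_deleteVert_le hw hT hS1 hanc hsS1 hdisj hcover hx ht)
    (dist_deleteVert_le_G2 hw hT hS1 hanc hsS1 hdisj hx ht)

/-- **Correctness of the `G₂` construction.** `T` is a shortest path tree of `G` rooted
at `s` (given by `VT`, `tp`), split into subtrees `T₁` (containing `s`, with vertex set
`S1`, ancestor-closed) and `T₂` (rooted at `z`, with vertex set `S2`), with
`S1 ∪ S2 = V(T)` and `S1 ∩ S2 = {z}`.  Then for every failed vertex `x ∈ S2 \ {z}` and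
destination `t ∈ S2 \ {z}`, `dist_{G₂−x}(s,t) = dist_{G−x}(s,t)`. -/
theorem G2_dist_eq {V : Type} [Fintype V] [DecidableEq V] (G : WDigraph V) (hw : G.PosWeights)
    (s : V) (VT : Set V) (tp : V → List V) (hT : IsSPT G s VT tp)
    (z : V) (S1 S2 : Set V)
    (hunion : S1 ∪ S2 = VT) (hinter : S1 ∩ S2 = {z}) (hsS1 : s ∈ S1)
    (hanc : ∀ v ∈ S1, ∀ u ∈ tp v, u ∈ S1)
    (hdesc : ∀ v ∈ S2, tp z <+: tp v) :
    ∀ x ∈ S2 \ {z}, ∀ t ∈ S2 \ {z},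
      ((G2 G s z S1 S2).deleteVert x).dist s t = (G.deleteVert x).dist s t :=
  G2_dist_eq_general G hw s VT tp hT z S1 S2 hunion hinter hsS1 hanc
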